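/- arXiv:2511.13004 — 5 statements merged into one kernel-verified Lean document; each statement's English description precedes it below -/
import Mathlib

section
/- Let n, δ be integers with δ ≥ 2 and n ≥ 7δ - 7. Then the signless Laplacian spectral radius of G* = K_δ ∨ (K_{n-2δ+1} ∪ (δ-1)K₁) satisfies 2n - 2δ < ρ_Q(G*) < 2n - δ. -/
/-- The join of two simple graphs: all edges within each part, plus all cross edges. -/
def gJoin {α β : Type*} (G : SimpleGraph α) (H : SimpleGraph β) : SimpleGraph (α ⊕ β) where
  Adj u v := match u, v with
    | Sum.inl a, Sum.inl b => G.Adj a b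
    | Sum.inr a, Sum.inr b => H.Adj a b
    | Sum.inl _, Sum.inr _ => True
    | Sum.inr _, Sum.inl _ => True
  symm := by constructor; rintro (a | a) (b | b) h
             · exact G.symm.symm _ _ h
             · trivial
             · trivial
             · exact H.symm.symm _ _ h
  loopless := by constructor; rintro (a | a) h
                 · exact G.loopless.irrefl a h
                 · exact H.loopless.irrefl a h

/-- The disjoint union of two simple graphs. -/
def gSum {α β : Type*} (G : SimpleGraph α) (H : SimpleGraph β) : SimpleGraph (α ⊕ β) where
  Adj u v := match u, v with
    | Sum.inl a, Sum.inl b => G.Adj a b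
    | Sum.inr a, Sum.inr b => H.Adj a b
    | _, _ => False
  symm := by constructor; rintro (a | a) (b | b) h
             · exact G.symm.symm _ _ h
             · exact h.elim
             · exact h.elim
             · exact H.symm.symm _ _ h
  loopless := by constructor; rintro (a | a) h
                 · exact G.loopless.irrefl a h
                 · exact H.loopless.irrefl a h

/-- The graph `K_δ ∨ (K_{n-2δ+1} ∪ (δ-1)K₁)`. -/
def Gstar (n δ : ℕ) :
    SimpleGraph (Fin δ ⊕ (Fin (n - 2 * δ + 1) ⊕ Fin (δ - 1))) :=
  gJoin (⊤ : SimpleGraph (Fin δ))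
    (gSum (⊤ : SimpleGraph (Fin (n - 2 * δ + 1))) (⊥ : SimpleGraph (Fin (δ - 1))))

/-- The signless Laplacian matrix `Q(G) = D(G) + A(G)` over ℝ. -/
noncomputable def qMatrix {V : Type*} [Fintype V] (G : SimpleGraph V) : Matrix V V ℝ := by
  classical exact Matrix.diagonal (fun v => (G.degree v : ℝ)) + G.adjMatrix ℝ

/-- The distance matrix of a graph over ℝ. -/
noncomputable def dMatrix {V : Type*} [Fintype V] (G : SimpleGraph V) : Matrix V V ℝ :=
  fun u v => (G.dist u v : ℝ)

/-- The set of eigenvalues of a real matrix. -/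
def eigSet {V : Type*} [Fintype V] (M : Matrix V V ℝ) : Set ℝ :=
  {μ | ∃ v : V → ℝ, v ≠ 0 ∧ M.mulVec v = μ • v}

/-- The number of odd components of a graph. -/
noncomputable def oddComp {V : Type*} (G : SimpleGraph V) : ℕ :=
  Nat.card {C : G.ConnectedComponent // Odd (Nat.card C.supp)}

/-- `F` is an even factor of `G`: a spanning subgraph with all degrees even and nonzero. -/
def IsEvenFactor {V : Type*} [Fintype V] (G F : SimpleGraph V) : Prop := by
  classical exact F ≤ G ∧ ∀ v : V, Even (F.degree v) ∧ 0 < F.degree v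

/-! `Q(G*)` maps vectors that are constant on the three blocks `K_δ`, `K_{n-2δ+1}`, `(δ-1)K₁`
to vectors of the same kind, through a `3 × 3` quotient matrix. Its characteristic cubic
changes sign on `[2n - 2δ, 2n - δ]`, and the root found there lifts to an eigenvalue of `Q(G*)`,
which gives the lower bound. For the upper bound, the degree vector `z` of `G*` is positive with
`Q z < (2n - δ) z` entrywise; for a nonnegative matrix such a vector bounds every eigenvalue,
as one sees by comparing an eigenvector `v` with `z` at a coordinate maximising `|v i| / z i`. -/

open Matrix SimpleGraph

section Join

variable {α β R : Type*} (G : SimpleGraph α) (H : SimpleGraph β)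

@[simp] theorem gJoin_adj_inl_inl {a a' : α} : (gJoin G H).Adj (.inl a) (.inl a') ↔ G.Adj a a' :=
  Iff.rfl
@[simp] theorem gJoin_adj_inr_inr {b b' : β} : (gJoin G H).Adj (.inr b) (.inr b') ↔ H.Adj b b' :=
  Iff.rfl
@[simp] theorem gJoin_adj_inl_inr {a : α} {b : β} : (gJoin G H).Adj (.inl a) (.inr b) :=
  trivial
@[simp] theorem gJoin_adj_inr_inl {a : α} {b : β} : (gJoin G H).Adj (.inr b) (.inl a) :=
  trivial

@[simp] theorem gSum_adj_inl_inl {a a' : α} : (gSum G H).Adj (.inl a) (.inl a') ↔ G.Adj a a' :=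
  Iff.rfl
@[simp] theorem gSum_adj_inr_inr {b b' : β} : (gSum G H).Adj (.inr b) (.inr b') ↔ H.Adj b b' :=
  Iff.rfl
@[simp] theorem gSum_not_adj_inl_inr {a : α} {b : β} : ¬(gSum G H).Adj (.inl a) (.inr b) :=
  id
@[simp] theorem gSum_not_adj_inr_inl {a : α} {b : β} : ¬(gSum G H).Adj (.inr b) (.inl a) :=
  id

instance [DecidableRel G.Adj] [DecidableRel H.Adj] : DecidableRel (gJoin G H).Adj
  | .inl a, .inl b => inferInstanceAs (Decidable (G.Adj a b))
  | .inr a, .inr b => inferInstanceAs (Decidable (H.Adj a b))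
  | .inl _, .inr _ => inferInstanceAs (Decidable True)
  | .inr _, .inl _ => inferInstanceAs (Decidable True)

instance [DecidableRel G.Adj] [DecidableRel H.Adj] : DecidableRel (gSum G H).Adj
  | .inl a, .inl b => inferInstanceAs (Decidable (G.Adj a b))
  | .inr a, .inr b => inferInstanceAs (Decidable (H.Adj a b))
  | .inl _, .inr _ => inferInstanceAs (Decidable False)
  | .inr _, .inl _ => inferInstanceAs (Decidable False)

variable [Fintype α] [Fintype β] [DecidableRel G.Adj] [DecidableRel H.Adj] [NonAssocSemiring R]

theorem gJoin_adjMatrix_mulVec_inl (x : α ⊕ β → R) (a : α) :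
    ((gJoin G H).adjMatrix R *ᵥ x) (.inl a) =
      (G.adjMatrix R *ᵥ (x ∘ .inl)) a + ∑ b, x (.inr b) := by
  simp [mulVec, dotProduct, Fintype.sum_sum_type]

theorem gJoin_adjMatrix_mulVec_inr (x : α ⊕ β → R) (b : β) :
    ((gJoin G H).adjMatrix R *ᵥ x) (.inr b) =
      ∑ a, x (.inl a) + (H.adjMatrix R *ᵥ (x ∘ .inr)) b := by
  simp [mulVec, dotProduct, Fintype.sum_sum_type]

theorem gSum_adjMatrix_mulVec_inl (x : α ⊕ β → R) (a : α) :
    ((gSum G H).adjMatrix R *ᵥ x) (.inl a) = (G.adjMatrix R *ᵥ (x ∘ .inl)) a := by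
  simp [mulVec, dotProduct, Fintype.sum_sum_type]

theorem gSum_adjMatrix_mulVec_inr (x : α ⊕ β → R) (b : β) :
    ((gSum G H).adjMatrix R *ᵥ x) (.inr b) = (H.adjMatrix R *ᵥ (x ∘ .inr)) b := by
  simp [mulVec, dotProduct, Fintype.sum_sum_type]

end Join

section SignlessLaplacian

variable {V : Type*} [Fintype V]

theorem qMatrix_apply_nonneg (G : SimpleGraph V) (u w : V) : 0 ≤ qMatrix G u w := by
  classical
  simp only [qMatrix, Matrix.add_apply, diagonal_apply, adjMatrix_apply]
  split_ifs <;> positivity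

theorem qMatrix_mulVec_apply (G : SimpleGraph V) [DecidableRel G.Adj] (x : V → ℝ) (v : V) :
    (qMatrix G *ᵥ x) v = G.degree v * x v + (G.adjMatrix ℝ *ᵥ x) v := by
  classical
  unfold qMatrix
  rw [add_mulVec, Pi.add_apply, mulVec_diagonal]
  congr!

end SignlessLaplacian

def blockConst {α β γ : Type*} (a b c : ℝ) : α ⊕ (β ⊕ γ) → ℝ :=
  Sum.elim (fun _ => a) (Sum.elim (fun _ => b) (fun _ => c))

instance (n δ : ℕ) : DecidableRel (Gstar n δ).Adj :=
  inferInstanceAs (DecidableRel (gJoin _ (gSum _ _)).Adj)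

theorem adjMatrix_Gstar_mulVec_blockConst {n δ : ℕ} (hδ : 1 ≤ δ) (h : 2 * δ ≤ n) (a b c : ℝ) :
    (Gstar n δ).adjMatrix ℝ *ᵥ blockConst a b c =
      blockConst ((δ - 1) * a + (n - 2 * δ + 1) * b + (δ - 1) * c) (δ * a + (n - 2 * δ) * b)
        (δ * a) := by
  funext v
  change ((gJoin ⊤ (gSum ⊤ ⊥)).adjMatrix ℝ *ᵥ blockConst a b c) v = _
  rcases v with i | j | k
  · rw [gJoin_adjMatrix_mulVec_inl]
    simp [-adjMatrix_top, Finset.card_compl, blockConst, Fintype.sum_sum_type, Nat.cast_sub hδ,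
      Nat.cast_sub h]
    ring
  · rw [gJoin_adjMatrix_mulVec_inr, gSum_adjMatrix_mulVec_inl]
    simp [-adjMatrix_top, Finset.card_compl, blockConst, Nat.cast_sub h]
  · rw [gJoin_adjMatrix_mulVec_inr, gSum_adjMatrix_mulVec_inr]
    simp [blockConst]

theorem blockConst_pos {α β γ : Type*} {a b c : ℝ} (ha : 0 < a) (hb : 0 < b) (hc : 0 < c) :
    ∀ v : α ⊕ (β ⊕ γ), 0 < blockConst a b c v := by
  rintro (_ | _ | _) <;> assumption

theorem qMatrix_Gstar_mulVec_blockConst {n δ : ℕ} (hδ : 1 ≤ δ) (h : 2 * δ ≤ n) (a b c : ℝ) :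
    qMatrix (Gstar n δ) *ᵥ blockConst a b c =
      blockConst ((n + δ - 2) * a + (n - 2 * δ + 1) * b + (δ - 1) * c)
        (δ * a + (2 * n - 3 * δ) * b) (δ * a + δ * c) := by
  have hdeg (v) : ((Gstar n δ).degree v : ℝ) = blockConst (n - 1) (n - δ) δ v := by
    have hone : (blockConst 1 1 1 : Fin δ ⊕ (Fin (n - 2 * δ + 1) ⊕ Fin (δ - 1)) → ℝ) =
        Function.const _ 1 := by ext (_ | _ | _) <;> rfl
    have := congrFun (adjMatrix_Gstar_mulVec_blockConst hδ h 1 1 1) v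
    rw [hone, adjMatrix_mulVec_const_apply, mul_one] at this
    rw [this]
    rcases v with _ | _ | _ <;> simp only [blockConst, Sum.elim_inl, Sum.elim_inr] <;> ring
  funext v
  rw [qMatrix_mulVec_apply, hdeg, adjMatrix_Gstar_mulVec_blockConst hδ h]
  rcases v with _ | _ | _ <;> simp only [blockConst, Sum.elim_inl, Sum.elim_inr] <;> ring

theorem abs_lt_of_mem_eigSet_of_mulVec_lt {V : Type*} [Fintype V] {M : Matrix V V ℝ}
    (hM : ∀ i j, 0 ≤ M i j) {z : V → ℝ} (hz : ∀ i, 0 < z i) {c : ℝ}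
    (hMz : ∀ i, (M *ᵥ z) i < c * z i) {μ : ℝ} (hμ : μ ∈ eigSet M) : |μ| < c := by
  obtain ⟨v, hv0, hv⟩ := hμ
  obtain ⟨x, hx⟩ := Function.ne_iff.mp hv0
  obtain ⟨u, -, hu⟩ :=
    Finset.exists_max_image Finset.univ (fun i => |v i| / z i) ⟨x, Finset.mem_univ x⟩
  set t := |v u| / z u
  have hvt (i) : |v i| ≤ t * z i := (div_le_iff₀ (hz i)).1 (hu i (Finset.mem_univ i))
  have ht : 0 < t := (div_pos (abs_pos.2 hx) (hz x)).trans_le (hu x (Finset.mem_univ x))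
  have hvu : |v u| = t * z u := (div_mul_cancel₀ _ (hz u).ne').symm
  have key : |μ| * |v u| < c * |v u| := calc
    |μ| * |v u| = |(M *ᵥ v) u| := by rw [hv, Pi.smul_apply, smul_eq_mul, abs_mul]
    _ ≤ ∑ j, M u j * |v j| := (Finset.abs_sum_le_sum_abs _ _).trans_eq
          (Finset.sum_congr rfl fun j _ => by rw [abs_mul, abs_of_nonneg (hM u j)])
    _ ≤ ∑ j, M u j * (t * z j) :=
          Finset.sum_le_sum fun j _ => mul_le_mul_of_nonneg_left (hvt j) (hM u j)
    _ = t * (M *ᵥ z) u := by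
          simp only [mulVec, dotProduct, Finset.mul_sum]
          exact Finset.sum_congr rfl fun j _ => by ring
    _ < t * (c * z u) := mul_lt_mul_of_pos_left (hMz u) ht
    _ = c * |v u| := by rw [hvu]; ring
  exact lt_of_mul_lt_mul_right key (abs_nonneg _)

theorem qMatrix_Gstar_mulVec_degrees_lt {n δ : ℕ} (hδ : 1 ≤ δ) (h : 2 * δ ≤ n)
    (h' : 3 * δ ≤ n + 3) (v) :
    (qMatrix (Gstar n δ) *ᵥ blockConst (n - 1) (n - δ) δ) v <
      (2 * n - δ) * blockConst (n - 1) (n - δ) δ v := by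
  have hδR : (1 : ℝ) ≤ δ := by exact_mod_cast hδ
  have hR : (2 * δ : ℝ) ≤ n := by exact_mod_cast h
  have hR' : (3 * δ : ℝ) ≤ n + 3 := by exact_mod_cast h'
  rw [qMatrix_Gstar_mulVec_blockConst hδ h]
  rcases v with _ | _ | _ <;> simp only [blockConst, Sum.elim_inl, Sum.elim_inr] <;> nlinarith

/-- The characteristic polynomial of the quotient matrix of `qMatrix (Gstar n d)` on
block-constant vectors, read off from `qMatrix_Gstar_mulVec_blockConst`. -/
def quotCubic (n d x : ℝ) : ℝ :=
  (x - n - d + 2) * (x - 2 * n + 3 * d) * (x - d) - d * (n - 2 * d + 1) * (x - d)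
    - d * (d - 1) * (x - 2 * n + 3 * d)

theorem exists_quotCubic_eq_zero {n d : ℝ} (hd : 2 ≤ d) (hn : 7 * d - 7 ≤ n) :
    ∃ μ, 2 * n - 2 * d < μ ∧ quotCubic n d μ = 0 := by
  have hleft : quotCubic n d (2 * n - 2 * d) = -(2 * d * (d - 1) * (n - d)) := by
    unfold quotCubic; ring
  have hright : quotCubic n d (2 * n - d) = 2 * d * ((n - d) * (n - 2 * d + 3) - d * (d - 1)) := by
    unfold quotCubic; ring
  have hcont : Continuous (quotCubic n d) := by unfold quotCubic; fun_prop
  have h0 : (0 : ℝ) ∈ Set.Ioo (quotCubic n d (2 * n - 2 * d)) (quotCubic n d (2 * n - d)) := by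
    have hsq : d * d ≤ (n - d) * (n - 2 * d + 3) :=
      mul_le_mul (by linarith) (by linarith) (by linarith) (by linarith)
    rw [hleft, hright]
    constructor
    · nlinarith [mul_pos (by linarith : (0 : ℝ) < d - 1) (by linarith : 0 < n - d)]
    · exact mul_pos (by linarith) (by nlinarith)
  obtain ⟨μ, hμ, hroot⟩ := intermediate_value_Ioo (by linarith) hcont.continuousOn h0
  exact ⟨μ, hμ.1, hroot⟩

theorem mem_eigSet_qMatrix_Gstar {n δ : ℕ} (hδ : 1 ≤ δ) (h : 2 * δ ≤ n) {μ : ℝ} (hμ : δ < μ)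
    (hroot : quotCubic n δ μ = 0) : μ ∈ eigSet (qMatrix (Gstar n δ)) := by
  have hδR : (0 : ℝ) < δ := by exact_mod_cast hδ
  -- the entries solve the last two rows of the quotient eigen-equation; the first row is the cubic
  refine ⟨blockConst ((μ - 2 * n + 3 * δ) * (μ - δ)) (δ * (μ - δ)) (δ * (μ - 2 * n + 3 * δ)),
    fun h0 => ?_, ?_⟩
  · have := congrFun h0 (.inr (.inl 0))
    simp only [blockConst, Sum.elim_inl, Sum.elim_inr, Pi.zero_apply] at this
    nlinarith [mul_pos hδR (sub_pos.2 hμ)]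
  · rw [qMatrix_Gstar_mulVec_blockConst hδ h]
    funext v
    rcases v with _ | _ | _ <;>
      simp only [blockConst, Sum.elim_inl, Sum.elim_inr, Pi.smul_apply, smul_eq_mul]
    · unfold quotCubic at hroot; linear_combination -hroot
    all_goals ring

theorem stmt_2 (n δ : ℕ) (hδ : 2 ≤ δ) (hn : 7 * (δ : ℝ) - 7 ≤ n) (ρ : ℝ)
    (hρ : IsGreatest (eigSet (qMatrix (Gstar n δ))) ρ) :
    2 * (n : ℝ) - 2 * δ < ρ ∧ ρ < 2 * (n : ℝ) - δ := by
  have hδR : (2 : ℝ) ≤ δ := by exact_mod_cast hδ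
  have h1 : 1 ≤ δ := by omega
  have h2 : 2 * δ ≤ n := by exact_mod_cast (by linarith : (2 * δ : ℝ) ≤ n)
  have h3 : 3 * δ ≤ n + 3 := by exact_mod_cast (by linarith : (3 * δ : ℝ) ≤ n + 3)
  obtain ⟨μ, hμ, hroot⟩ := exists_quotCubic_eq_zero hδR hn
  constructor
  · exact hμ.trans_le (hρ.2 (mem_eigSet_qMatrix_Gstar h1 h2 (by linarith) hroot))
  · exact (le_abs_self ρ).trans_lt <| abs_lt_of_mem_eigSet_of_mulVec_lt (qMatrix_apply_nonneg _)
      (blockConst_pos (by linarith) (by linarith) (by linarith))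
      (qMatrix_Gstar_mulVec_degrees_lt h1 h2 h3) hρ.1
end

section
/- For all real numbers n, s, δ with δ ≥ 2, 2 ≤ s ≤ n/2, and n ≥ 7δ - 7, and all real x ≥ 2n - 2δ, the quantity η₁(x) = x² + (n + 4 - 4s - 4δ)x - 2n² + 2n + 4sn + 4δn - 2s² - 2δ² - 2s - 2δ - 2sδ is strictly positive. -/
/-! Write `η₁(x) = x² + b x + c` with `b = n + 4 - 4s - 4δ`. Since `x₀ = 2n - 2δ` lies to the right
of the vertex `-b/2` (because `n ≥ 7δ - 7` and `s ≤ n/2`), `η₁` is increasing on `[x₀, ∞)`, so it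
suffices that `η₁(x₀) > 0`. This is a polynomial inequality in `n, s, δ`; it follows from products of
the constraints `n - 2s ≥ 0`, `n - 7δ + 7 ≥ 0`, `δ - 2 ≥ 0`. -/

def eta₁ (n s δ x : ℝ) : ℝ :=
  x ^ 2 + (n + 4 - 4 * s - 4 * δ) * x - 2 * n ^ 2 + 2 * n + 4 * s * n + 4 * δ * n
    - 2 * s ^ 2 - 2 * δ ^ 2 - 2 * s - 2 * δ - 2 * s * δ

theorem monic_quadratic_pos_of_le {b c x₀ x : ℝ} (hx : x₀ ≤ x) (hvertex : 0 ≤ 2 * x₀ + b)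
    (h₀ : 0 < x₀ ^ 2 + b * x₀ + c) : 0 < x ^ 2 + b * x + c := by
  have hshift : x ^ 2 + b * x + c = (x - x₀) * (x + x₀ + b) + (x₀ ^ 2 + b * x₀ + c) := by ring
  have hprod : 0 ≤ (x - x₀) * (x + x₀ + b) := mul_nonneg (by linarith) (by linarith)
  linarith

theorem eta₁_two_mul_sub_pos {n s δ : ℝ} (hδ : 2 ≤ δ) (hs1 : 2 ≤ s) (hs2 : s ≤ n / 2)
    (hn : 7 * δ - 7 ≤ n) : 0 < eta₁ n s δ (2 * n - 2 * δ) := by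
  unfold eta₁
  nlinarith [mul_nonneg (by linarith : (0:ℝ) ≤ n - 2*s) (by linarith : (0:ℝ) ≤ n - 7*δ + 7),
      mul_nonneg (by linarith : (0:ℝ) ≤ n - 2*s) (by linarith : (0:ℝ) ≤ δ - 2),
      mul_nonneg (by linarith : (0:ℝ) ≤ n - 7*δ + 7) (by linarith : (0:ℝ) ≤ δ - 2),
      sq_nonneg (n - 2*s), sq_nonneg (δ - 2), sq_nonneg (n - 7*δ + 7)]

theorem stmt_4 (n s δ x : ℝ) (hδ : 2 ≤ δ) (hs1 : 2 ≤ s) (hs2 : s ≤ n / 2)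
    (hn : 7 * δ - 7 ≤ n) (hx : 2 * n - 2 * δ ≤ x) :
    x ^ 2 + (n + 4 - 4 * s - 4 * δ) * x - 2 * n ^ 2 + 2 * n + 4 * s * n + 4 * δ * n
      - 2 * s ^ 2 - 2 * δ ^ 2 - 2 * s - 2 * δ - 2 * s * δ > 0 := by
  have h₀ := eta₁_two_mul_sub_pos hδ hs1 hs2 hn
  unfold eta₁ at h₀
  have hpos := monic_quadratic_pos_of_le (b := n + 4 - 4 * s - 4 * δ)
    (c := -2 * n ^ 2 + 2 * n + 4 * s * n + 4 * δ * n - 2 * s ^ 2 - 2 * δ ^ 2 - 2 * s - 2 * δ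
      - 2 * s * δ) hx (by linarith) (by linarith)
  linarith
end

section
/- Let n, s, δ be real numbers with s ≥ 3, δ ≥ s + 1, and n ≥ δ²/4 + δ/2 + 6. Then f(n) = (4s-8)n² + (34δ + 8s - 16δs - 18)n + 2s⁴ - 10s³ - 2δs³ + 6δs² + 18s² + 16δ²s - 18δs - 14s - 36δ² + 34δ > 0. -/
/-!
A quadratic with nonnegative leading coefficient that is positive and nondecreasing at `x₀` stays
positive to the right of `x₀`. For `gap s δ` at `x₀ = δ²/4 + δ/2 + 6` both facts become evident in the
coordinates `a = s - 3 ≥ 0`, `b = δ - s - 1 ≥ 0`: the value and the slope there are polynomials in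
`a` and `b` with nonnegative coefficients and positive constant terms (100 and 46).
-/

theorem quadratic_pos_of_le {K : Type*} [Field K] [LinearOrder K] [IsStrictOrderedRing K]
    {c e g x₀ x : K} (hc : 0 ≤ c) (h₀ : 0 < c * x₀ ^ 2 + e * x₀ + g)
    (hslope : 0 ≤ 2 * c * x₀ + e) (hx : x₀ ≤ x) : 0 < c * x ^ 2 + e * x + g := by
  have taylor : c * x ^ 2 + e * x + g
      = (c * x₀ ^ 2 + e * x₀ + g) + (2 * c * x₀ + e) * (x - x₀) + c * (x - x₀) ^ 2 := by ring
  rw [taylor]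
  exact add_pos_of_pos_of_nonneg (add_pos_of_pos_of_nonneg h₀ (mul_nonneg hslope (sub_nonneg.2 hx)))
    (mul_nonneg hc (sq_nonneg _))

namespace EvenFactor

/-- The paper's `η₂(2x - 2δ)`, expanded as a polynomial in `x`. -/
def gap (s δ x : ℝ) : ℝ :=
  (4 * s - 8) * x ^ 2 + (34 * δ + 8 * s - 16 * δ * s - 18) * x
    + (2 * s ^ 4 - 10 * s ^ 3 - 2 * δ * s ^ 3 + 6 * δ * s ^ 2 + 18 * s ^ 2
      + 16 * δ ^ 2 * s - 18 * δ * s - 14 * s - 36 * δ ^ 2 + 34 * δ)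

noncomputable abbrev threshold (δ : ℝ) : ℝ := δ ^ 2 / 4 + δ / 2 + 6

theorem gap_threshold_pos {s δ : ℝ} (hs : 3 ≤ s) (hδ : s + 1 ≤ δ) :
    0 < gap s δ (threshold δ) := by
  obtain ⟨a, ha, rfl⟩ : ∃ a : ℝ, 0 ≤ a ∧ s = a + 3 := ⟨s - 3, by linarith, by ring⟩
  obtain ⟨b, hb, rfl⟩ : ∃ b : ℝ, 0 ≤ b ∧ δ = a + b + 4 := ⟨δ - a - 4, by linarith, by ring⟩
  unfold gap threshold
  ring_nf
  positivity

theorem gap_slope_threshold_nonneg {s δ : ℝ} (hs : 3 ≤ s) (hδ : s + 1 ≤ δ) :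
    0 ≤ 2 * (4 * s - 8) * threshold δ + (34 * δ + 8 * s - 16 * δ * s - 18) := by
  obtain ⟨a, ha, rfl⟩ : ∃ a : ℝ, 0 ≤ a ∧ s = a + 3 := ⟨s - 3, by linarith, by ring⟩
  obtain ⟨b, hb, rfl⟩ : ∃ b : ℝ, 0 ≤ b ∧ δ = a + b + 4 := ⟨δ - a - 4, by linarith, by ring⟩
  unfold threshold
  ring_nf
  positivity

theorem gap_pos {s δ x : ℝ} (hs : 3 ≤ s) (hδ : s + 1 ≤ δ) (hx : threshold δ ≤ x) :
    0 < gap s δ x :=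
  quadratic_pos_of_le (by linarith) (gap_threshold_pos hs hδ)
    (gap_slope_threshold_nonneg hs hδ) hx

end EvenFactor

theorem stmt_5 (n s δ : ℝ) (hs : 3 ≤ s) (hδ : s + 1 ≤ δ) (hn : δ ^ 2 / 4 + δ / 2 + 6 ≤ n) :
    (4 * s - 8) * n ^ 2 + (34 * δ + 8 * s - 16 * δ * s - 18) * n
      + 2 * s ^ 4 - 10 * s ^ 3 - 2 * δ * s ^ 3 + 6 * δ * s ^ 2 + 18 * s ^ 2
      + 16 * δ ^ 2 * s - 18 * δ * s - 14 * s - 36 * δ ^ 2 + 34 * δ > 0 := by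
  have h := EvenFactor.gap_pos hs hδ hn
  unfold EvenFactor.gap at h
  linarith
end

section
/- For all real numbers n and δ with δ ≥ 2 and n ≥ 7δ - 7, the cubic ψ(x) = x³ + (4 - 3n)x² + (2n² + 4δn - 10n - 4δ² + 8)x + 4n² - 4δn² + 4δ²n + 8δn - 12n - 8δ² + 8 satisfies ψ(x) > 0 for all x ≥ 2n - δ. -/
/-! Substituting `x = (2n - δ) + t` turns `ψ` into a cubic in `t ≥ 0` whose coefficients are all
nonnegative and whose constant term `ψ(2n - δ)` is positive once `n ≥ 7δ - 7` and `δ ≥ 2`. -/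

def psi (n δ x : ℝ) : ℝ :=
  x ^ 3 + (4 - 3 * n) * x ^ 2 + (2 * n ^ 2 + 4 * δ * n - 10 * n - 4 * δ ^ 2 + 8) * x
    + 4 * n ^ 2 - 4 * δ * n ^ 2 + 4 * δ ^ 2 * n + 8 * δ * n - 12 * n - 8 * δ ^ 2 + 8

lemma psi_add_eq (n δ t : ℝ) :
    psi n δ (2 * n - δ + t) =
      t ^ 3 + (3 * (n - δ) + 4) * t ^ 2
        + (2 * n ^ 2 - 2 * n * δ - δ ^ 2 + 6 * n - 8 * δ + 8) * t + psi n δ (2 * n - δ) := by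
  unfold psi
  ring

lemma psi_base_eq (n δ : ℝ) :
    psi n δ (2 * n - δ) = δ * (2 * n - 3 * δ) * (n - δ) + (2 * δ + 4) * (n - 2 * δ) + 8 := by
  unfold psi
  ring

section
variable {n δ : ℝ} (hδ : 2 ≤ δ) (hn : 7 * δ - 7 ≤ n)
include hδ hn

lemma psi_base_pos : 0 < psi n δ (2 * n - δ) := by
  rw [psi_base_eq]
  have h₁ : 0 < δ * (2 * n - 3 * δ) * (n - δ) := by
    have : 0 < 2 * n - 3 * δ := by linarith
    have : 0 < n - δ := by linarith
    positivity
  have h₂ : 0 ≤ (2 * δ + 4) * (n - 2 * δ) := mul_nonneg (by linarith) (by linarith)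
  linarith

lemma psi_add_linear_coeff_nonneg : 0 ≤ 2 * n ^ 2 - 2 * n * δ - δ ^ 2 + 6 * n - 8 * δ + 8 := by
  nlinarith [mul_pos (by linarith : (0 : ℝ) < n - δ) (by linarith : (0 : ℝ) < n - δ),
    mul_pos (by linarith : (0 : ℝ) < 2 * n - 3 * δ) (by linarith : (0 : ℝ) < n - δ)]

end

theorem stmt_7 (n δ : ℝ) (hδ : 2 ≤ δ) (hn : 7 * δ - 7 ≤ n) :
    ∀ x : ℝ, 2 * n - δ ≤ x →
      x ^ 3 + (4 - 3 * n) * x ^ 2 + (2 * n ^ 2 + 4 * δ * n - 10 * n - 4 * δ ^ 2 + 8) * x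
        + 4 * n ^ 2 - 4 * δ * n ^ 2 + 4 * δ ^ 2 * n + 8 * δ * n - 12 * n - 8 * δ ^ 2 + 8 > 0 := by
  intro x hx
  obtain ⟨t, ht, rfl⟩ : ∃ t, 0 ≤ t ∧ x = 2 * n - δ + t := ⟨x - (2 * n - δ), by linarith, by ring⟩
  change 0 < psi n δ (2 * n - δ + t)
  rw [psi_add_eq]
  have hb : 0 ≤ 3 * (n - δ) + 4 := by linarith
  have hc := psi_add_linear_coeff_nonneg hδ hn
  have hd := psi_base_pos hδ hn
  positivity
end

section
/- Let n, s, δ be real numbers with 4 ≤ s ≤ δ - 1 and n ≥ δ²/3 + 3. Then g(n) = (3s-6)n² + (2s³ - 11s² - 2δs² + 7δs + 9s - 4δ + 9)n - s⁴ + 3δs³ + s³ - 2δ²s² - 8δs² + 12s² + 4δ²s + 4δs + 21s - δ² - δ + 3 > 0. -/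
/-!
Write `s = a + 4`, `δ = a + b + 5` and `n = n₀ + m` with `n₀ = δ² / 3 + 3` and `a, b, m ≥ 0`.
Expanding `g` around `n₀` as `g n₀ + g'(n₀) m + (3s - 6) m²`, both `3 g(n₀)` and `3 g'(n₀)` become
polynomials in `a, b` with nonnegative coefficients, the constant term of `3 g(n₀)` being `1021`.
-/

def gLinCoeff (s δ : ℝ) : ℝ :=
  2 * s ^ 3 - 11 * s ^ 2 - 2 * δ * s ^ 2 + 7 * δ * s + 9 * s - 4 * δ + 9

def gConstCoeff (s δ : ℝ) : ℝ :=
  -s ^ 4 + 3 * δ * s ^ 3 + s ^ 3 - 2 * δ ^ 2 * s ^ 2 - 8 * δ * s ^ 2 + 12 * s ^ 2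
    + 4 * δ ^ 2 * s + 4 * δ * s + 21 * s - δ ^ 2 - δ + 3

def g (s δ n : ℝ) : ℝ := (3 * s - 6) * n ^ 2 + gLinCoeff s δ * n + gConstCoeff s δ

lemma g_add (s δ x m : ℝ) :
    g s δ (x + m) = g s δ x + (2 * (3 * s - 6) * x + gLinCoeff s δ) * m + (3 * s - 6) * m ^ 2 := by
  unfold g; ring

lemma exists_shift_params {s δ : ℝ} (hs : 4 ≤ s) (hsδ : s ≤ δ - 1) :
    ∃ a b : ℝ, 0 ≤ a ∧ 0 ≤ b ∧ s = a + 4 ∧ δ = a + b + 5 :=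
  ⟨s - 4, δ - 1 - s, by linarith, by linarith, by ring, by ring⟩

lemma g_threshold_pos {s δ : ℝ} (hs : 4 ≤ s) (hsδ : s ≤ δ - 1) : 0 < g s δ (δ ^ 2 / 3 + 3) := by
  obtain ⟨a, b, ha, hb, rfl, rfl⟩ := exists_shift_params hs hsδ
  have key : 3 * g (a + 4) (a + b + 5) ((a + b + 5) ^ 2 / 3 + 3) =
      1021 + 385 * b + 162 * b ^ 2 + 32 * b ^ 3 + 2 * b ^ 4 + 676 * a + 310 * a * b
        + 110 * a * b ^ 2 + 19 * a * b ^ 3 + a * b ^ 4 + 304 * a ^ 2 + 110 * a ^ 2 * b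
        + 22 * a ^ 2 * b ^ 2 + 2 * a ^ 2 * b ^ 3 + 100 * a ^ 3 + 24 * a ^ 3 * b
        + 2 * a ^ 3 * b ^ 2 + 16 * a ^ 4 + 2 * a ^ 4 * b + a ^ 5 := by
    unfold g gLinCoeff gConstCoeff; ring
  have : 0 < 3 * g (a + 4) (a + b + 5) ((a + b + 5) ^ 2 / 3 + 3) := by rw [key]; positivity
  linarith

lemma g_slope_threshold_nonneg {s δ : ℝ} (hs : 4 ≤ s) (hsδ : s ≤ δ - 1) :
    0 ≤ 2 * (3 * s - 6) * (δ ^ 2 / 3 + 3) + gLinCoeff s δ := by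
  obtain ⟨a, b, ha, hb, rfl, rfl⟩ := exists_shift_params hs hsδ
  have key : 3 * (2 * (3 * (a + 4) - 6) * ((a + b + 5) ^ 2 / 3 + 3) + gLinCoeff (a + 4) (a + b + 5)) =
      279 + 96 * b + 12 * b ^ 2 + 216 * a + 57 * a * b + 6 * a * b ^ 2 + 54 * a ^ 2
        + 6 * a ^ 2 * b + 6 * a ^ 3 := by
    unfold gLinCoeff; ring
  have : 0 ≤ 3 * (2 * (3 * (a + 4) - 6) * ((a + b + 5) ^ 2 / 3 + 3)
      + gLinCoeff (a + 4) (a + b + 5)) := by rw [key]; positivity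
  linarith

theorem stmt_12 (n s δ : ℝ) (hs : 4 ≤ s) (hsδ : s ≤ δ - 1) (hn : δ ^ 2 / 3 + 3 ≤ n) :
    (3 * s - 6) * n ^ 2 + (2 * s ^ 3 - 11 * s ^ 2 - 2 * δ * s ^ 2 + 7 * δ * s + 9 * s - 4 * δ + 9) * n
      - s ^ 4 + 3 * δ * s ^ 3 + s ^ 3 - 2 * δ ^ 2 * s ^ 2 - 8 * δ * s ^ 2 + 12 * s ^ 2
      + 4 * δ ^ 2 * s + 4 * δ * s + 21 * s - δ ^ 2 - δ + 3 > 0 := by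
  suffices h : 0 < g s δ n by unfold g gLinCoeff gConstCoeff at h; linarith
  obtain ⟨m, hm, rfl⟩ : ∃ m, 0 ≤ m ∧ n = δ ^ 2 / 3 + 3 + m := ⟨n - (δ ^ 2 / 3 + 3), by linarith, by ring⟩
  rw [g_add]
  have hslope := mul_nonneg (g_slope_threshold_nonneg hs hsδ) hm
  have hlead : 0 ≤ (3 * s - 6) * m ^ 2 := mul_nonneg (by linarith) (sq_nonneg m)
  linarith [g_threshold_pos hs hsδ]
end
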